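/- arXiv:1602.08085 — 5 statements merged into one kernel-verified Lean document; each statement's English description precedes it below -/
import Mathlib

section
/- Let U be an m×m upper triangular matrix with 1's on the diagonal. Then for every pair of indices i, j there is a polynomial p_{ij}(n) of degree at most |j - i| such that for all natural numbers n, the (i,j) entry of U^n equals p_{ij}(n). -/
open Finset Polynomial Matrix Nat

lemma strict_upper_pow_entry {m : ℕ} (N : Matrix (Fin m) (Fin m) ℝ)
    (hN : ∀ i j : Fin m, (j : ℕ) ≤ (i : ℕ) → N i j = 0) :
    ∀ (k : ℕ) (i j : Fin m), ¬ ((i : ℕ) + k ≤ (j : ℕ)) → (N ^ k) i j = 0 := by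
  intro k
  induction k with
  | zero =>
    intro i j h
    have hij : i ≠ j := by
      intro he; subst he; omega
    simp [Matrix.one_apply_ne hij]
  | succ k ih =>
    intro i j h
    rw [pow_succ, Matrix.mul_apply]
    apply Finset.sum_eq_zero
    intro x _
    by_cases hx : (j : ℕ) ≤ (x : ℕ)
    · rw [hN x j hx, mul_zero]
    · rw [ih i x (by omega), zero_mul]

/-- If `U` is an `m × m` upper triangular real matrix with `1`'s on the
diagonal, then each entry of `U ^ n` is a polynomial in `n` of degree at most `|j - i|`. -/
theorem upper_unitriangular_pow_entry_polynomial
    (m : ℕ) (U : Matrix (Fin m) (Fin m) ℝ)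
    (htri : ∀ i j : Fin m, (j : ℕ) < (i : ℕ) → U i j = 0)
    (hdiag : ∀ i : Fin m, U i i = 1) :
    ∀ i j : Fin m, ∃ p : Polynomial ℝ,
      p.natDegree ≤ ((j : ℤ) - (i : ℤ)).natAbs ∧
      ∀ n : ℕ, (U ^ n) i j = p.eval (n : ℝ) := by
  set N : Matrix (Fin m) (Fin m) ℝ := U - 1 with hNdef
  have hN : ∀ i j : Fin m, (j : ℕ) ≤ (i : ℕ) → N i j = 0 := by
    intro i j hji
    rcases eq_or_lt_of_le hji with h | h
    · have : i = j := Fin.ext h.symm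
      subst this
      simp [hNdef, hdiag i]
    · have hij : i ≠ j := by intro he; subst he; omega
      simp [hNdef, htri i j h, Matrix.one_apply_ne hij]
  have hpow := strict_upper_pow_entry N hN
  intro i j
  refine ⟨∑ k ∈ range m, ((N ^ k) i j) • ((k ! : ℝ)⁻¹ • descPochhammer ℝ k), ?_, ?_⟩
  · apply Polynomial.natDegree_sum_le_of_forall_le
    intro k _
    by_cases hk : (i : ℕ) + k ≤ (j : ℕ)
    · calc (((N ^ k) i j) • ((k ! : ℝ)⁻¹ • descPochhammer ℝ k)).natDegree
          ≤ ((k ! : ℝ)⁻¹ • descPochhammer ℝ k).natDegree := Polynomial.natDegree_smul_le _ _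
        _ ≤ (descPochhammer ℝ k).natDegree := Polynomial.natDegree_smul_le _ _
        _ = k := descPochhammer_natDegree ℝ k
        _ ≤ ((j : ℤ) - (i : ℤ)).natAbs := by omega
    · rw [hpow k i j hk, zero_smul]
      simp
  · intro n
    -- binomial expansion
    have hU : U = N + 1 := by simp [hNdef]
    have hcomm : Commute N (1 : Matrix (Fin m) (Fin m) ℝ) := Commute.one_right N
    have hexp : U ^ n = ∑ k ∈ range (n + 1), N ^ k * 1 ^ (n - k) * (n.choose k : ℕ) := by
      rw [hU, hcomm.add_pow]
    have hentry : (U ^ n) i j = ∑ k ∈ range (n + 1), (n.choose k : ℝ) * (N ^ k) i j := by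
      rw [hexp]
      rw [Matrix.sum_apply]
      apply Finset.sum_congr rfl
      intro k _
      have hc : N ^ k * 1 ^ (n - k) * ((n.choose k : ℕ) : Matrix (Fin m) (Fin m) ℝ)
          = (n.choose k) • N ^ k := by
        rw [one_pow, mul_one, ← Nat.cast_commute (n.choose k) (N ^ k) |>.eq, ← nsmul_eq_mul]
      rw [hc, Matrix.smul_apply, nsmul_eq_mul]
    rw [hentry]
    have heval : (∑ k ∈ range m, ((N ^ k) i j) • ((k ! : ℝ)⁻¹ • descPochhammer ℝ k)).eval (n : ℝ)
        = ∑ k ∈ range m, (n.choose k : ℝ) * (N ^ k) i j := by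
      rw [Polynomial.eval_finset_sum]
      apply Finset.sum_congr rfl
      intro k _
      have h1 : (descPochhammer ℝ k).eval ((n : ℕ) : ℝ) = (n.descFactorial k : ℝ) :=
        descPochhammer_eval_eq_descFactorial ℝ n k
      have h2 : (n.descFactorial k : ℝ) = (k ! : ℝ) * (n.choose k : ℝ) := by
        rw [← Nat.cast_mul, Nat.descFactorial_eq_factorial_mul_choose]
      have hfac : (k ! : ℝ) ≠ 0 := Nat.cast_ne_zero.mpr k.factorial_ne_zero
      simp only [Polynomial.eval_smul, smul_eq_mul, h1, h2]
      field_simp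
    rw [heval]
    -- both sums equal the sum over range (max m (n+1))
    set M := max m (n + 1) with hM
    have hL : ∑ k ∈ range (n + 1), (n.choose k : ℝ) * (N ^ k) i j
        = ∑ k ∈ range M, (n.choose k : ℝ) * (N ^ k) i j := by
      apply Finset.sum_subset (Finset.range_subset_range.mpr (le_max_right _ _))
      intro k _ hk
      have : n < k := by simp only [Finset.mem_range, not_lt] at hk; omega
      rw [Nat.choose_eq_zero_of_lt this]
      simp
    have hR : ∑ k ∈ range m, (n.choose k : ℝ) * (N ^ k) i j
        = ∑ k ∈ range M, (n.choose k : ℝ) * (N ^ k) i j := by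
      apply Finset.sum_subset (Finset.range_subset_range.mpr (le_max_left _ _))
      intro k _ hk
      have hmk : m ≤ k := by simp only [Finset.mem_range, not_lt] at hk; omega
      have : ¬ ((i : ℕ) + k ≤ (j : ℕ)) := by have := j.isLt; omega
      rw [hpow k i j this, mul_zero]
    rw [hL, hR]
end

section
/- Let A be a non-negative irreducible real square matrix that is not the 1×1 zero matrix. Then the spectral radius ρ_A of A is strictly positive and is itself an eigenvalue of A. -/
/-!
Write `ρ = specRad A`. Since `tr (A ^ m)` is the sum of the `m`-th powers of the complex
eigenvalues, `tr (A ^ m) ≤ k ρ ^ m`. For a non-negative matrix,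
`(A ^ p) j i * (A ^ q) i j ≤ tr (A ^ (p + q))`, and irreducibility makes `(A ^ p) j i > 0` for some
`p`; hence every entry of `A ^ q` is `O(ρ ^ q)`. This gives `ρ > 0`, and shows that `c • y ≤ A y`
with `y ≥ 0`, `y ≠ 0` forces `c ≤ ρ`.

Let `μ` be an eigenvalue with `‖μ‖ = ρ` and eigenvector `v`. Then `x = |v|` satisfies
`ρ • x ≤ A x`. If this inequality were strict somewhere, applying a positive matrix `M` commuting
with `A` (a sum of powers of `A`) would give `u = M x > 0` with `(ρ + δ) • u ≤ A u` for some
`δ > 0`, which is impossible. So `A x = ρ • x` and `ρ` is an eigenvalue.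
-/

/-- The spectral radius of a real square matrix: the supremum of the moduli of its
complex eigenvalues. -/
noncomputable def specRad {k : ℕ} (A : Matrix (Fin k) (Fin k) ℝ) : ℝ :=
  sSup ((fun μ : ℂ => ‖μ‖) '' spectrum ℂ (A.map (algebraMap ℝ ℂ)))

/-- A non-negative square matrix is irreducible if for every pair of indices `i, j`
there is `n ≥ 1` with `(A ^ n) i j > 0`. -/
def MatIrreducible {k : ℕ} (A : Matrix (Fin k) (Fin k) ℝ) : Prop :=
  ∀ i j : Fin k, ∃ n : ℕ, 1 ≤ n ∧ 0 < (A ^ n) i j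

open Matrix Filter Topology

theorem exists_pos_smul_le {n : Type*} [Finite n] {u z : n → ℝ} (hz : ∀ i, 0 < z i) :
    ∃ δ : ℝ, 0 < δ ∧ δ • u ≤ z := by
  have hsmall : ∀ᶠ δ in 𝓝[>] (0 : ℝ), ∀ i, δ * u i < z i := by
    refine eventually_all.2 fun i => ?_
    have : Tendsto (fun δ : ℝ => δ * u i) (𝓝[>] 0) (𝓝 0) :=
      ((continuous_mul_const (u i)).tendsto' 0 0 (zero_mul _)).mono_left nhdsWithin_le_nhds
    exact this.eventually (gt_mem_nhds (hz i))
  obtain ⟨δ, hδ, hδpos⟩ := (hsmall.and self_mem_nhdsWithin).exists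
  exact ⟨δ, hδpos, fun i => (hδ i).le⟩

theorem le_of_forall_mul_pow_le_mul_pow {a b c r : ℝ} (ha : 0 < a) (hr : 0 ≤ r)
    (h : ∀ p : ℕ, a * c ^ p ≤ b * r ^ p) : c ≤ r := by
  by_contra! hrc
  have hc : 0 < c := hr.trans_lt hrc
  have hlim : Tendsto (fun p : ℕ => b * (r / c) ^ p) atTop (𝓝 0) := by
    simpa using (tendsto_pow_atTop_nhds_zero_of_lt_one (div_nonneg hr hc.le)
      ((div_lt_one hc).2 hrc)).const_mul b
  obtain ⟨p, hp⟩ := (hlim.eventually (gt_mem_nhds ha)).exists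
  have := h p
  rw [div_pow, mul_div_assoc', div_lt_iff₀ (pow_pos hc p)] at hp
  linarith

namespace Matrix

section Nonneg

variable {n : Type*} [Fintype n] {A : Matrix n n ℝ}

theorem mulVec_mono (hA : ∀ i j, 0 ≤ A i j) {x y : n → ℝ} (h : x ≤ y) : A *ᵥ x ≤ A *ᵥ y :=
  fun i => Finset.sum_le_sum fun j _ => mul_le_mul_of_nonneg_left (h j) (hA i j)

theorem mulVec_pos (hA : ∀ i j, 0 < A i j) {y : n → ℝ} (hy : 0 ≤ y) (hy0 : y ≠ 0) (i : n) :
    0 < (A *ᵥ y) i := by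
  obtain ⟨j, hj⟩ : ∃ j, y j ≠ 0 := Function.ne_iff.1 hy0
  exact Finset.sum_pos' (fun l _ => mul_nonneg (hA i l).le (hy l))
    ⟨j, Finset.mem_univ j, mul_pos (hA i j) ((hy j).lt_of_ne' hj)⟩

theorem norm_smul_le_mulVec_norm (hA : ∀ i j, 0 ≤ A i j) {v : n → ℂ} {μ : ℂ}
    (hv : A.map (algebraMap ℝ ℂ) *ᵥ v = μ • v) :
    ‖μ‖ • (fun i => ‖v i‖) ≤ A *ᵥ fun i => ‖v i‖ := fun i =>
  calc ‖μ‖ * ‖v i‖ = ‖∑ j, (A i j : ℂ) * v j‖ := by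
        rw [← norm_mul, ← smul_eq_mul, ← Pi.smul_apply, ← hv]; rfl
    _ ≤ ∑ j, A i j * ‖v j‖ := by
        refine (norm_sum_le _ _).trans_eq (Finset.sum_congr rfl fun j _ => ?_)
        rw [norm_mul, Complex.norm_real, Real.norm_of_nonneg (hA i j)]

variable [DecidableEq n]

theorem pow_smul_le_pow_mulVec (hA : ∀ i j, 0 ≤ A i j) {c : ℝ} (hc : 0 ≤ c) {y : n → ℝ}
    (h : c • y ≤ A *ᵥ y) (p : ℕ) : c ^ p • y ≤ (A ^ p) *ᵥ y := by
  induction p with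
  | zero => simp
  | succ p ih =>
    calc c ^ (p + 1) • y = c ^ p • (c • y) := by rw [pow_succ, mul_smul]
      _ ≤ c ^ p • (A *ᵥ y) := smul_le_smul_of_nonneg_left h (pow_nonneg hc p)
      _ = A *ᵥ (c ^ p • y) := (mulVec_smul A _ y).symm
      _ ≤ A *ᵥ ((A ^ p) *ᵥ y) := mulVec_mono hA ih
      _ = (A ^ (p + 1)) *ᵥ y := by rw [mulVec_mulVec, pow_succ']

theorem pow_apply_mul_pow_apply_le_trace (hA : ∀ i j, 0 ≤ A i j) (p q : ℕ) (i j : n) :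
    (A ^ p) j i * (A ^ q) i j ≤ (A ^ (p + q)).trace := by
  have hnn := pow_apply_nonneg hA
  calc (A ^ p) j i * (A ^ q) i j ≤ (A ^ p * A ^ q) j j := by
        rw [mul_apply]
        exact Finset.single_le_sum (fun l _ => mul_nonneg (hnn p j l) (hnn q l j))
          (Finset.mem_univ i)
    _ ≤ (A ^ (p + q)).trace := by
        rw [← pow_add]
        exact Finset.single_le_sum (fun l _ => hnn _ l l) (Finset.mem_univ j)

end Nonneg

variable {n : Type*} [Fintype n] [DecidableEq n]

theorem mem_spectrum_iff_exists_mulVec_eq_smul {K : Type*} [Field K] {A : Matrix n n K}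
    {μ : K} : μ ∈ spectrum K A ↔ ∃ v ≠ 0, A *ᵥ v = μ • v := by
  rw [← spectrum_toLin', ← Module.End.hasEigenvalue_iff_mem_spectrum]
  constructor
  · intro h
    obtain ⟨v, hv, hv0⟩ := h.exists_hasEigenvector
    exact ⟨v, hv0, by simpa using Module.End.mem_eigenspace_iff.1 hv⟩
  · rintro ⟨v, hv0, hv⟩
    exact Module.End.hasEigenvalue_of_hasEigenvector
      ⟨Module.End.mem_eigenspace_iff.2 (by simpa using hv), hv0⟩

theorem map_mem_spectrum_map {K L : Type*} [Field K] [CommRing L] [Nontrivial L] (f : K →+* L)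
    {A : Matrix n n K} {μ : K} (h : μ ∈ spectrum K A) : f μ ∈ spectrum L (A.map f) :=
  mem_spectrum_of_isRoot_charpoly <| by
    rw [charpoly_map]; exact (mem_spectrum_iff_isRoot_charpoly.1 h).map

theorem norm_trace_le_card_mul {B : Matrix n n ℂ} {R : ℝ}
    (hR : ∀ μ ∈ spectrum ℂ B, ‖μ‖ ≤ R) : ‖B.trace‖ ≤ Fintype.card n * R := by
  have hroots : ∀ r ∈ B.charpoly.roots.map (‖·‖), r ≤ R := by
    simp only [Multiset.mem_map, Polynomial.mem_roots B.charpoly_monic.ne_zero]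
    rintro _ ⟨μ, hμ, rfl⟩
    exact hR μ (mem_spectrum_iff_isRoot_charpoly.2 hμ)
  calc ‖B.trace‖ ≤ (B.charpoly.roots.map (‖·‖)).sum := by
        rw [trace_eq_sum_roots_charpoly]; exact norm_multiset_sum_le _
    _ ≤ (B.charpoly.roots.map (‖·‖)).card • R := Multiset.sum_le_card_nsmul _ _ hroots
    _ = Fintype.card n * R := by
        rw [Multiset.card_map, IsAlgClosed.card_roots_eq_natDegree, charpoly_natDegree_eq_dim,
          nsmul_eq_mul]

end Matrix

section SpecRad

variable {k : ℕ}

theorem specRad_nonneg (A : Matrix (Fin k) (Fin k) ℝ) : 0 ≤ specRad A :=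
  Real.sSup_nonneg <| by rintro _ ⟨μ, -, rfl⟩; exact norm_nonneg μ

theorem norm_le_specRad {A : Matrix (Fin k) (Fin k) ℝ} {μ : ℂ}
    (h : μ ∈ spectrum ℂ (A.map (algebraMap ℝ ℂ))) : ‖μ‖ ≤ specRad A :=
  le_csSup ((finite_spectrum _).image _).bddAbove ⟨μ, h, rfl⟩

theorem exists_mem_spectrum_norm_eq_specRad (hk : 0 < k) (A : Matrix (Fin k) (Fin k) ℝ) :
    ∃ μ ∈ spectrum ℂ (A.map (algebraMap ℝ ℂ)), ‖μ‖ = specRad A :=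
  have : Nonempty (Fin k) := ⟨⟨0, hk⟩⟩
  Set.Nonempty.csSup_mem ((spectrum.nonempty_of_isAlgClosed_of_finiteDimensional ℂ _).image _)
    ((finite_spectrum _).image _)

theorem abs_trace_pow_le (A : Matrix (Fin k) (Fin k) ℝ) {p : ℕ} (hp : 0 < p) :
    |(A ^ p).trace| ≤ k * specRad A ^ p := by
  have hspec : ∀ ν ∈ spectrum ℂ (A.map (algebraMap ℝ ℂ) ^ p), ‖ν‖ ≤ specRad A ^ p := by
    rw [spectrum.map_pow_of_pos _ hp]
    rintro _ ⟨μ, hμ, rfl⟩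
    rw [norm_pow]
    exact pow_le_pow_left₀ (norm_nonneg μ) (norm_le_specRad hμ) p
  have := norm_trace_le_card_mul hspec
  rwa [← Matrix.map_pow, ← AddMonoidHom.map_trace, Complex.coe_algebraMap, Complex.norm_real,
    Fintype.card_fin] at this

end SpecRad

namespace MatIrreducible

variable {k : ℕ} {A : Matrix (Fin k) (Fin k) ℝ}

theorem exists_pow_apply_le_mul_specRad_pow (hA : ∀ i j, 0 ≤ A i j) (hirr : MatIrreducible A)
    (i j : Fin k) : ∃ C, ∀ q, (A ^ q) i j ≤ C * specRad A ^ q := by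
  obtain ⟨p, hp, hpos⟩ := hirr j i
  refine ⟨k * specRad A ^ p / (A ^ p) j i, fun q => ?_⟩
  rw [div_mul_eq_mul_div, le_div_iff₀ hpos, mul_assoc, ← pow_add, mul_comm]
  exact (pow_apply_mul_pow_apply_le_trace hA p q i j).trans
    ((le_abs_self _).trans (abs_trace_pow_le A (by omega)))

theorem specRad_pos (hk : 0 < k) (hA : ∀ i j, 0 ≤ A i j) (hirr : MatIrreducible A) :
    0 < specRad A := by
  obtain ⟨p, hp, hpos⟩ := hirr ⟨0, hk⟩ ⟨0, hk⟩
  obtain ⟨C, hC⟩ := hirr.exists_pow_apply_le_mul_specRad_pow hA ⟨0, hk⟩ ⟨0, hk⟩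
  refine (specRad_nonneg A).lt_of_ne fun h => ?_
  have := hC p
  rw [← h, zero_pow (by omega), mul_zero] at this
  linarith

theorem le_specRad (hA : ∀ i j, 0 ≤ A i j) (hirr : MatIrreducible A) {y : Fin k → ℝ}
    (hy : 0 ≤ y) (hy0 : y ≠ 0) {c : ℝ} (hc : 0 ≤ c) (h : c • y ≤ A *ᵥ y) : c ≤ specRad A := by
  obtain ⟨i, hi⟩ : ∃ i, y i ≠ 0 := Function.ne_iff.1 hy0
  choose C hC using hirr.exists_pow_apply_le_mul_specRad_pow hA i
  refine le_of_forall_mul_pow_le_mul_pow ((hy i).lt_of_ne' hi) (specRad_nonneg A)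
    (b := ∑ j, C j * y j) fun q => ?_
  calc y i * c ^ q ≤ ((A ^ q) *ᵥ y) i := by
        rw [mul_comm]; exact pow_smul_le_pow_mulVec hA hc h q i
    _ ≤ ∑ j, C j * specRad A ^ q * y j := by
        simp only [mulVec, dotProduct]
        exact Finset.sum_le_sum fun j _ => mul_le_mul_of_nonneg_right (hC j q) (hy j)
    _ = (∑ j, C j * y j) * specRad A ^ q := by
        rw [Finset.sum_mul]; exact Finset.sum_congr rfl fun j _ => by ring

theorem exists_commute_forall_pos (hA : ∀ i j, 0 ≤ A i j) (hirr : MatIrreducible A) :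
    ∃ M, Commute A M ∧ ∀ i j, 0 < M i j := by
  choose p _ hpos using hirr
  let S := Finset.univ.image fun ij : Fin k × Fin k => p ij.1 ij.2
  refine ⟨∑ q ∈ S, A ^ q, Commute.sum_right _ _ _ fun q _ => Commute.self_pow A q,
    fun i j => ?_⟩
  rw [Matrix.sum_apply]
  exact (hpos i j).trans_le (Finset.single_le_sum (fun q _ => pow_apply_nonneg hA q i j)
    (Finset.mem_image_of_mem _ (Finset.mem_univ (i, j))))

theorem mulVec_eq_specRad_smul (hA : ∀ i j, 0 ≤ A i j) (hirr : MatIrreducible A)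
    {x : Fin k → ℝ} (hx : 0 ≤ x) (hx0 : x ≠ 0) (h : specRad A • x ≤ A *ᵥ x) :
    A *ᵥ x = specRad A • x := by
  set ρ := specRad A
  by_contra hne
  set w := A *ᵥ x - ρ • x
  obtain ⟨M, hAM, hM⟩ := hirr.exists_commute_forall_pos hA
  have hu : ∀ i, 0 < (M *ᵥ x) i := mulVec_pos hM hx hx0
  have hz : ∀ i, 0 < (M *ᵥ w) i := mulVec_pos hM (sub_nonneg.2 h) (sub_ne_zero.2 hne)
  obtain ⟨δ, hδ, hδu⟩ := exists_pos_smul_le (u := M *ᵥ x) hz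
  have hAu : A *ᵥ (M *ᵥ x) = ρ • (M *ᵥ x) + M *ᵥ w := by
    rw [mulVec_mulVec, hAM.eq, ← mulVec_mulVec, ← mulVec_smul, ← mulVec_add, add_sub_cancel]
  have hgrow : (ρ + δ) • (M *ᵥ x) ≤ A *ᵥ (M *ᵥ x) := by
    rw [hAu, add_smul]; exact add_le_add_right hδu _
  obtain ⟨i, -⟩ := Function.ne_iff.1 hx0
  have hu0 : M *ᵥ x ≠ 0 := fun h0 => (hu i).ne' (congrFun h0 i)
  have := hirr.le_specRad hA (fun i => (hu i).le) hu0 (add_nonneg (specRad_nonneg A) hδ.le) hgrow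
  linarith

end MatIrreducible

theorem specRad_pos_and_eigenvalue_of_irreducible_general
    (k : ℕ) (hk : 0 < k) (A : Matrix (Fin k) (Fin k) ℝ)
    (hA : ∀ i j, 0 ≤ A i j) (hirr : MatIrreducible A) :
    0 < specRad A ∧
      (specRad A : ℂ) ∈ spectrum ℂ (A.map (algebraMap ℝ ℂ)) := by
  obtain ⟨μ, hμ, hμρ⟩ := exists_mem_spectrum_norm_eq_specRad hk A
  obtain ⟨v, hv0, hv⟩ := mem_spectrum_iff_exists_mulVec_eq_smul.1 hμ
  have hx0 : (fun i => ‖v i‖) ≠ 0 := fun h =>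
    hv0 <| funext fun i => norm_eq_zero.1 (congrFun h i)
  have heig := hirr.mulVec_eq_specRad_smul hA (fun i => norm_nonneg (v i)) hx0
    (hμρ ▸ norm_smul_le_mulVec_norm hA hv)
  exact ⟨hirr.specRad_pos hk hA,
    map_mem_spectrum_map _ (mem_spectrum_iff_exists_mulVec_eq_smul.2 ⟨_, hx0, heig⟩)⟩

/-- a non-negative irreducible real square matrix that is not the `1 × 1`
zero matrix has strictly positive spectral radius, and the spectral radius is itself an
eigenvalue. -/
theorem specRad_pos_and_eigenvalue_of_irreducible
    (k : ℕ) (hk : 0 < k) (A : Matrix (Fin k) (Fin k) ℝ)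
    (hA : ∀ i j, 0 ≤ A i j) (hirr : MatIrreducible A)
    (hne : ¬ (k = 1 ∧ A = 0)) :
    0 < specRad A ∧
      (specRad A : ℂ) ∈ spectrum ℂ (A.map (algebraMap ℝ ℂ)) :=
  specRad_pos_and_eigenvalue_of_irreducible_general k hk A hA hirr
end

section
/- (Ping-pong lemma with amalgamation) Let H and Z be subgroups of a group G acting on a set Ω, with the index [Z : H∩Z] > 2. Suppose Ω_H and Ω_Z are disjoint nonempty subsets of Ω such that h·Ω_H ⊆ Ω_Z for every h ∈ H − Z, and z·Ω_Z ⊆ Ω_H for every z ∈ Z − H. Then the subgroup generated by H and Z is isomorphic to the amalgamated free product H *_{H∩Z} Z. -/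
/-!
A nonempty word alternating between letters of `H − Z` and of `Z − H` whose first and last
letters lie on the same side, say in `H − Z`, maps `Ω_H` into `Ω_Z`, so it is not `1`. A word
whose end letters lie on different sides is conjugate to one of the first kind: by rotating
its first letter to the end, or by an element `t ∈ Z` outside the cosets `H ∩ Z` and
`z (H ∩ Z)` of its first letter `z`, which exists because `[Z : H ∩ Z] > 2`. Multiplying the
first letter by an element of `H ∩ Z` keeps a word alternating, so no such word represents an
element of `H ∩ Z`; by the normal form theorem for amalgamated products, this is injectivity.
-/

open Monoid

section PingPong

variable {G : Type*} [Group G] (H Z : Subgroup G)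

/-- The two-element family of groups `H`, `Z`. -/
def pingPongFam : Bool → Type _ := fun b => cond b H Z

instance : ∀ b, Group (pingPongFam H Z b) := fun b => by
  cases b <;> (dsimp [pingPongFam]; infer_instance)

/-- The inclusions of `H ⊓ Z` into `H` and `Z`. -/
def pingPongIncl : ∀ b : Bool, ↥(H ⊓ Z) →* pingPongFam H Z b := fun b =>
  match b with
  | true => Subgroup.inclusion inf_le_left
  | false => Subgroup.inclusion inf_le_right

/-- The amalgamated free product `H *_{H ⊓ Z} Z`, as a pushout of groups. -/
def AmalgamatedProduct : Type _ := PushoutI (pingPongIncl H Z)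

noncomputable instance : Group (AmalgamatedProduct H Z) := by
  unfold AmalgamatedProduct; infer_instance

/-- The canonical homomorphism `H *_{H ⊓ Z} Z → G` induced by the inclusions of `H`
and `Z` into `G`. -/
def amalgamCanonicalHom : AmalgamatedProduct H Z →* G :=
  PushoutI.lift
    (fun b => match b with
      | true => (H.subtype : ↥H →* G)
      | false => (Z.subtype : ↥Z →* G))
    ((H ⊓ Z).subtype)
    (by intro b; cases b <;> rfl)

theorem Subgroup.exists_inv_mul_notMem_and_inv_mul_notMem {M : Type*} [Group M]
    {K : Subgroup M} (hK : 2 < K.index ∨ K.index = 0) (a b : M) :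
    ∃ t, t⁻¹ * a ∉ K ∧ t⁻¹ * b ∉ K := by
  have hcard : 3 ≤ ENat.card (M ⧸ K) := by
    rcases hK with hK | hK
    · have : Finite (M ⧸ K) := Nat.finite_of_card_ne_zero (K.index_eq_card ▸ by omega)
      rw [ENat.card_eq_coe_natCard, ← K.index_eq_card]
      exact_mod_cast hK
    · have := Subgroup.index_eq_zero_iff_infinite.1 hK
      simp [ENat.card_eq_top_of_infinite]
  obtain ⟨c, hca, hcb⟩ := ENat.exists_ne_ne_of_three_le hcard (a : M ⧸ K) (b : M ⧸ K)
  obtain ⟨t, rfl⟩ := QuotientGroup.mk_surjective c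
  exact ⟨t, fun h => hca (QuotientGroup.eq.2 h), fun h => hcb (QuotientGroup.eq.2 h)⟩

theorem exists_mem_notMem_and_inv_mul_notMem (hindex : 2 < H.relIndex Z ∨ H.relIndex Z = 0)
    {z : G} (hz : z ∈ Z) : ∃ t ∈ Z, t ∉ H ∧ t⁻¹ * z ∉ H := by
  obtain ⟨t, ht, htz⟩ :=
    Subgroup.exists_inv_mul_notMem_and_inv_mul_notMem hindex (1 : Z) ⟨z, hz⟩
  refine ⟨t, t.2, fun h => ht ?_, fun h => htz ?_⟩
  · simpa [Subgroup.mem_subgroupOf] using inv_mem h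
  · simpa [Subgroup.mem_subgroupOf] using h

/-- Side `true` is `H − Z` and side `false` is `Z − H`; `b` and `c` are the sides of the first
and last letters of `l`. -/
inductive IsAlternating : Bool → Bool → List G → Prop
  | singleton {b : Bool} {g : G} :
      g ∈ cond b H Z → g ∉ cond (!b) H Z → IsAlternating b b [g]
  | cons {b c : Bool} {g : G} {l : List G} :
      g ∈ cond b H Z → g ∉ cond (!b) H Z → IsAlternating (!b) c l →
        IsAlternating b c (g :: l)

theorem mem_cond_of_mem_inf {k : G} (hk : k ∈ H ⊓ Z) (b : Bool) : k ∈ cond b H Z := by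
  cases b
  exacts [hk.2, hk.1]

namespace IsAlternating

variable {H Z} {Ω : Type*} [MulAction G Ω] {ΩH ΩZ : Set Ω}

theorem append {b c e : Bool} {l₁ l₂ : List G} (h₁ : IsAlternating H Z b c l₁)
    (h₂ : IsAlternating H Z (!c) e l₂) : IsAlternating H Z b e (l₁ ++ l₂) := by
  induction h₁ with
  | singleton hg hg' => exact cons hg hg' h₂
  | cons hg hg' _ ih => exact cons hg hg' (ih h₂)

theorem replace_head {b c : Bool} {g g' : G} {l : List G} (h : IsAlternating H Z b c (g :: l))
    (hg : g' ∈ cond b H Z) (hg' : g' ∉ cond (!b) H Z) : IsAlternating H Z b c (g' :: l) := by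
  cases h with
  | singleton => exact singleton hg hg'
  | cons _ _ hl => exact cons hg hg' hl

theorem prod_smul_mem (hH : ∀ h : G, h ∈ H → h ∉ Z → ∀ x ∈ ΩH, h • x ∈ ΩZ)
    (hZ : ∀ z : G, z ∈ Z → z ∉ H → ∀ x ∈ ΩZ, z • x ∈ ΩH)
    {b c : Bool} {l : List G} (hl : IsAlternating H Z b c l) {x : Ω} (hx : x ∈ cond c ΩH ΩZ) :
    l.prod • x ∈ cond (!b) ΩH ΩZ := by
  have letter : ∀ {b : Bool} {g : G}, g ∈ cond b H Z → g ∉ cond (!b) H Z →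
      ∀ y ∈ cond b ΩH ΩZ, g • y ∈ cond (!b) ΩH ΩZ := by
    rintro (_ | _) g hg hg'
    exacts [hZ g hg hg', hH g hg hg']
  induction hl with
  | singleton hg hg' => simpa using letter hg hg' x hx
  | @cons b c g l hg hg' _ ih =>
    rw [List.prod_cons, mul_smul]
    exact letter hg hg' _ (by simpa using ih hx)

theorem prod_ne_one_of_same_side (hdisj : Disjoint ΩH ΩZ) (hHne : ΩH.Nonempty)
    (hZne : ΩZ.Nonempty) (hH : ∀ h : G, h ∈ H → h ∉ Z → ∀ x ∈ ΩH, h • x ∈ ΩZ)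
    (hZ : ∀ z : G, z ∈ Z → z ∉ H → ∀ x ∈ ΩZ, z • x ∈ ΩH)
    {b : Bool} {l : List G} (hl : IsAlternating H Z b b l) : l.prod ≠ 1 := by
  have hdisj' : Disjoint (cond b ΩH ΩZ) (cond (!b) ΩH ΩZ) := by
    cases b
    exacts [hdisj.symm, hdisj]
  obtain ⟨x, hx⟩ : (cond b ΩH ΩZ).Nonempty := by
    cases b
    exacts [hZne, hHne]
  intro h1
  have hmoved := hl.prod_smul_mem hH hZ hx
  rw [h1, one_smul] at hmoved
  exact hdisj'.ne_of_mem hx hmoved rfl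

theorem prod_ne_one (hindex : 2 < H.relIndex Z ∨ H.relIndex Z = 0)
    (hdisj : Disjoint ΩH ΩZ) (hHne : ΩH.Nonempty) (hZne : ΩZ.Nonempty)
    (hH : ∀ h : G, h ∈ H → h ∉ Z → ∀ x ∈ ΩH, h • x ∈ ΩZ)
    (hZ : ∀ z : G, z ∈ Z → z ∉ H → ∀ x ∈ ΩZ, z • x ∈ ΩH)
    {b c : Bool} {l : List G} (hl : IsAlternating H Z b c l) : l.prod ≠ 1 := by
  have same_side := fun {e : Bool} {l : List G} (hl : IsAlternating H Z e e l) =>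
    hl.prod_ne_one_of_same_side hdisj hHne hZne hH hZ
  -- a word `z ⋯ h` becomes, after conjugating by some `t ∈ Z`, the word `(t⁻¹ z) ⋯ h t` of
  -- letters `Z − H` at both ends
  have from_Z : ∀ {l : List G}, IsAlternating H Z false true l → l.prod ≠ 1 := by
    intro l hl
    obtain _ | @⟨_, _, z, l', hz, -, hl'⟩ := hl
    obtain ⟨t, htZ, htH, htz⟩ := exists_mem_notMem_and_inv_mul_notMem H Z hindex hz
    have hconj : IsAlternating H Z false false ((t⁻¹ * z) :: (l' ++ [t])) :=
      cons (mul_mem (inv_mem htZ) hz) htz (hl'.append (singleton htZ htH))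
    intro h1
    apply same_side hconj
    simp only [List.prod_cons, List.prod_append, List.prod_nil, mul_one] at h1 ⊢
    rw [mul_assoc, ← mul_assoc z, h1, one_mul, inv_mul_cancel]
  rcases b, c with ⟨_ | _, _ | _⟩
  · exact same_side hl
  · exact from_Z hl
  · obtain _ | @⟨_, _, h, l', hh, hh', hl'⟩ := hl
    intro h1
    apply from_Z (hl'.append (singleton hh hh'))
    simp only [List.prod_cons, List.prod_append, List.prod_nil, mul_one] at h1 ⊢
    rw [eq_inv_of_mul_eq_one_right h1, inv_mul_cancel]
  · exact same_side hl

theorem prod_notMem_inf (hindex : 2 < H.relIndex Z ∨ H.relIndex Z = 0)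
    (hdisj : Disjoint ΩH ΩZ) (hHne : ΩH.Nonempty) (hZne : ΩZ.Nonempty)
    (hH : ∀ h : G, h ∈ H → h ∉ Z → ∀ x ∈ ΩH, h • x ∈ ΩZ)
    (hZ : ∀ z : G, z ∈ Z → z ∉ H → ∀ x ∈ ΩZ, z • x ∈ ΩH)
    {b c : Bool} {l : List G} (hl : IsAlternating H Z b c l) : l.prod ∉ H ⊓ Z := by
  intro hk
  rcases l with _ | ⟨g, l⟩
  · cases hl
  have hkb := mem_cond_of_mem_inf H Z (inv_mem hk)
  obtain ⟨hg, hg'⟩ : g ∈ cond b H Z ∧ g ∉ cond (!b) H Z := by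
    cases hl <;> exact ⟨‹_›, ‹_›⟩
  have hl' := hl.replace_head (mul_mem (hkb b) hg) ((mul_mem_cancel_left (hkb !b)).not.2 hg')
  refine hl'.prod_ne_one hindex hdisj hHne hZne hH hZ ?_
  rw [List.prod_cons, mul_assoc, ← List.prod_cons, inv_mul_cancel]

end IsAlternating

theorem Monoid.PushoutI.NormalWord.reduced {ι : Type*} {M : ι → Type*} [∀ i, Group (M i)]
    {K : Type*} [Group K] {φ : ∀ i, K →* M i} {d : Transversal φ} (w : NormalWord d) :
    Reduced φ w.toWord := by
  rintro ⟨i, g⟩ hg hrange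
  refine w.ne_one _ hg ?_
  have hcompl := d.compl i
  rw [← hcompl.equiv_snd_eq_self_iff_mem (one_mem (φ i).range) |>.2 (w.normalized i g hg),
    hcompl.equiv_snd_eq_one_of_mem_of_one_mem (d.one_mem i) hrange]

theorem pingPongIncl_injective (b : Bool) : Function.Injective (pingPongIncl H Z b) := by
  cases b
  exacts [Subgroup.inclusion_injective inf_le_right, Subgroup.inclusion_injective inf_le_left]

theorem amalgamCanonicalHom_base (k : ↥(H ⊓ Z)) :
    amalgamCanonicalHom H Z (PushoutI.base (pingPongIncl H Z) k) = k :=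
  PushoutI.lift_base _ _ _ k

theorem amalgamCanonicalHom_of_true (g : pingPongFam H Z true) :
    amalgamCanonicalHom H Z (PushoutI.of true g) = H.subtype g :=
  PushoutI.lift_of _ _ _ g

theorem amalgamCanonicalHom_of_false (g : pingPongFam H Z false) :
    amalgamCanonicalHom H Z (PushoutI.of false g) = Z.subtype g :=
  PushoutI.lift_of _ _ _ g

theorem amalgamCanonicalHom_of_mem (b : Bool) (g : pingPongFam H Z b) :
    amalgamCanonicalHom H Z (PushoutI.of b g) ∈ cond b H Z := by
  cases b
  · rw [amalgamCanonicalHom_of_false]; exact g.2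
  · rw [amalgamCanonicalHom_of_true]; exact g.2

theorem amalgamCanonicalHom_of_mem_iff (b : Bool) (g : pingPongFam H Z b) :
    amalgamCanonicalHom H Z (PushoutI.of b g) ∈ cond (!b) H Z ↔
      g ∈ (pingPongIncl H Z b).range := by
  cases b
  · rw [amalgamCanonicalHom_of_false]
    change _ ↔ g ∈ (Subgroup.inclusion inf_le_right).range
    rw [Subgroup.inclusion_range]
    exact ⟨fun h => ⟨h, g.2⟩, fun h => h.1⟩
  · rw [amalgamCanonicalHom_of_true]
    change _ ↔ g ∈ (Subgroup.inclusion inf_le_left).range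
    rw [Subgroup.inclusion_range]
    exact ⟨fun h => ⟨g.2, h⟩, fun h => h.2⟩

theorem amalgamCanonicalHom_ofCoprodI_prod (w : CoprodI.Word (pingPongFam H Z)) :
    amalgamCanonicalHom H Z (PushoutI.ofCoprodI w.prod) =
      (w.toList.map fun p => amalgamCanonicalHom H Z (PushoutI.of p.1 p.2)).prod := by
  simp only [CoprodI.Word.prod, map_list_prod, List.map_map, Function.comp_def,
    PushoutI.ofCoprodI_of]
  exact (map_list_prod (amalgamCanonicalHom H Z) _).trans (congrArg List.prod (List.map_map ..))

theorem isAlternating_of_isChain {p : Σ b, pingPongFam H Z b}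
    {L : List (Σ b, pingPongFam H Z b)} (hchain : (p :: L).IsChain fun q r => q.1 ≠ r.1)
    (hred : ∀ q ∈ p :: L, q.2 ∉ (pingPongIncl H Z q.1).range) :
    ∃ c, IsAlternating H Z p.1 c
      ((p :: L).map fun q => amalgamCanonicalHom H Z (PushoutI.of q.1 q.2)) := by
  have letter := fun q hq => (amalgamCanonicalHom_of_mem_iff H Z q.1 q.2).not.2 (hred q hq)
  induction L generalizing p with
  | nil => exact ⟨p.1, .singleton (amalgamCanonicalHom_of_mem H Z _ _) (letter p (by simp))⟩
  | cons q L ih =>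
    obtain ⟨c, hc⟩ := ih hchain.tail (fun r hr => hred r (List.mem_cons_of_mem _ hr))
      (fun r hr => letter r (List.mem_cons_of_mem _ hr))
    have hpq : q.1 = !p.1 := Bool.eq_not_iff.2 (List.isChain_cons_cons.1 hchain).1.symm
    exact ⟨c, .cons (amalgamCanonicalHom_of_mem H Z _ _) (letter p (by simp)) (hpq ▸ hc)⟩

theorem toList_eq_nil_of_amalgamCanonicalHom_mem_inf
    {Ω : Type*} [MulAction G Ω] (hindex : 2 < H.relIndex Z ∨ H.relIndex Z = 0)
    {ΩH ΩZ : Set Ω} (hdisj : Disjoint ΩH ΩZ) (hHne : ΩH.Nonempty) (hZne : ΩZ.Nonempty)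
    (hH : ∀ h : G, h ∈ H → h ∉ Z → ∀ x ∈ ΩH, h • x ∈ ΩZ)
    (hZ : ∀ z : G, z ∈ Z → z ∉ H → ∀ x ∈ ΩZ, z • x ∈ ΩH)
    {w : CoprodI.Word (pingPongFam H Z)} (hw : PushoutI.Reduced (pingPongIncl H Z) w)
    (hmem : amalgamCanonicalHom H Z (PushoutI.ofCoprodI w.prod) ∈ H ⊓ Z) : w.toList = [] := by
  rcases hlist : w.toList with _ | ⟨p, L⟩
  · rfl
  obtain ⟨c, hc⟩ := isAlternating_of_isChain H Z (hlist ▸ w.chain_ne)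
    (hlist ▸ fun q hq => hw q hq)
  rw [amalgamCanonicalHom_ofCoprodI_prod, hlist] at hmem
  exact absurd hmem (hc.prod_notMem_inf hindex hdisj hHne hZne hH hZ)

theorem range_amalgamCanonicalHom : (amalgamCanonicalHom H Z).range = H ⊔ Z := by
  refine le_antisymm ?_ (sup_le
    (fun g hg => ⟨PushoutI.of true ⟨g, hg⟩, PushoutI.lift_of _ _ _ _⟩)
    (fun g hg => ⟨PushoutI.of false ⟨g, hg⟩, PushoutI.lift_of _ _ _ _⟩))
  rintro _ ⟨x, rfl⟩
  induction x using PushoutI.induction_on with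
  | of b g =>
    cases b
    exacts [Subgroup.mem_sup_right (amalgamCanonicalHom_of_mem H Z false g),
      Subgroup.mem_sup_left (amalgamCanonicalHom_of_mem H Z true g)]
  | base k => exact Subgroup.mem_sup_left ((amalgamCanonicalHom_base H Z k).symm ▸ k.2.1)
  | mul x y hx hy => exact (map_mul (amalgamCanonicalHom H Z) x y).symm ▸ mul_mem hx hy

/-- Ping-pong with amalgamation: if `[Z : H ⊓ Z] > 2` (possibly
infinite), and `Ω_H, Ω_Z` are disjoint nonempty subsets of an action set `Ω` with
`(H − Z) Ω_H ⊆ Ω_Z` and `(Z − H) Ω_Z ⊆ Ω_H`, then the canonical homomorphism from the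
amalgamated free product `H *_{H ⊓ Z} Z` to `G` is injective with image `⟨H, Z⟩`. -/
theorem ping_pong_amalgam
    {Ω : Type*} [MulAction G Ω]
    (hindex : 2 < H.relIndex Z ∨ H.relIndex Z = 0)
    (ΩH ΩZ : Set Ω) (hdisj : Disjoint ΩH ΩZ) (hHne : ΩH.Nonempty) (hZne : ΩZ.Nonempty)
    (hH : ∀ h : G, h ∈ H → h ∉ Z → ∀ x ∈ ΩH, h • x ∈ ΩZ)
    (hZ : ∀ z : G, z ∈ Z → z ∉ H → ∀ x ∈ ΩZ, z • x ∈ ΩH) :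
    Function.Injective (amalgamCanonicalHom H Z) ∧
      (amalgamCanonicalHom H Z).range = H ⊔ Z := by
  classical
  refine ⟨(injective_iff_map_eq_one _).2 fun x hx => ?_, range_amalgamCanonicalHom H Z⟩
  obtain ⟨d⟩ := PushoutI.NormalWord.transversal_nonempty _ (pingPongIncl_injective H Z)
  obtain ⟨w, rfl⟩ : ∃ w : PushoutI.NormalWord d, w.prod = x :=
    ⟨_, PushoutI.NormalWord.equiv.symm_apply_apply (show PushoutI (pingPongIncl H Z) from x)⟩
  have hw : amalgamCanonicalHom H Z (PushoutI.ofCoprodI w.toWord.prod) = (w.head : G)⁻¹ := by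
    refine eq_inv_of_mul_eq_one_right (Eq.trans ?_ hx)
    rw [← amalgamCanonicalHom_base H Z w.head]
    exact (map_mul (amalgamCanonicalHom H Z) _ _).symm
  have hlist : w.toList = [] := toList_eq_nil_of_amalgamCanonicalHom_mem_inf H Z hindex hdisj
    hHne hZne hH hZ w.reduced (hw ▸ inv_mem w.head.2)
  have hhead : w.head = 1 := by
    rw [amalgamCanonicalHom_ofCoprodI_prod, hlist, List.map_nil, List.prod_nil] at hw
    exact Subtype.ext (inv_eq_one.1 hw.symm)
  obtain rfl := PushoutI.NormalWord.ext (w₂ := .empty) hhead hlist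
  exact PushoutI.NormalWord.prod_empty

end PingPong
end

section
/- Let T be a rooted tree with root b such that for every vertex v, the subtree of vertices within distance k of v (rooted at v) is a k-tree (every leaf at distance exactly k from v, every internal vertex has 3 children except at most one with 2 children). Then there is a constant C > 0 such that the number of vertices of T at distance at most n from b is at least C·(3·(2/3)^{1/k})^n for all n ∈ ℕ. -/
section Tree

variable {V : Type*}

/-- The set of children of a vertex `v` in a rooted tree described by a parent map. -/
def childrenSet (root : V) (parent : V → V) (v : V) : Set V :=
  {w : V | w ≠ root ∧ parent w = v}

/-- `w` is a descendant of `v` at distance exactly `m` (following the parent map `m`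
times from `w` reaches `v`, with depth increasing accordingly). -/
def DescAt (parent : V → V) (depth : V → ℕ) (v : V) (m : ℕ) (w : V) : Prop :=
  parent^[m] w = v ∧ depth w = depth v + m

end Tree

/-!
Every depth-`k` window below a vertex has at least `3^k - 3^(k-1) = 2·3^(k-1)` vertices on its
bottom level: each of the `k` levels triples the previous one, except that the single vertex with
two children loses one subtree, which costs at most `3^(k-1)` vertices at the bottom. Gluing windows
end to end, the number of vertices at depth `n` grows by the factor `2·3^(k-1) = (3·(2/3)^(1/k))^k`
every `k` levels.
-/

theorem two_mul_three_pow_le_of_three_mul_le {a : ℕ → ℕ} {k ℓ : ℕ} (h0 : a 0 = 1)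
    (hstep : ∀ j < k, 3 * a j ≤ a (j + 1) + if j = ℓ then 1 else 0) : 2 * 3 ^ k ≤ 3 * a k := by
  -- after the lossy step at `ℓ`, level `j` falls short of `3 ^ j` by at most `3 ^ (j - 1)`
  have hinv : ∀ j ≤ k, 3 ^ (j + 1) ≤ 3 * a j + if ℓ < j then 3 ^ j else 0 := by
    intro j hj
    induction j with
    | zero => simp [h0]
    | succ j ih =>
      have hprev := ih (by omega)
      have hj' := hstep j (by omega)
      have hpos : 1 ≤ 3 ^ j := Nat.one_le_pow _ _ (by norm_num)
      rw [pow_succ, pow_succ] at *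
      split_ifs at * <;> omega
  have := hinv k le_rfl
  rw [pow_succ] at this
  split_ifs at this <;> omega

theorem mul_pow_le_of_pow_mul_le_add {g : ℕ → ℝ} {r C : ℝ} {k : ℕ} (hk : 0 < k) (hr : 0 ≤ r)
    (hstep : ∀ j, r ^ k * g j ≤ g (j + k)) (hbase : ∀ s < k, C * r ^ s ≤ g s) (n : ℕ) :
    C * r ^ n ≤ g n := by
  induction n using Nat.strong_induction_on with
  | _ n ih =>
    rcases lt_or_ge n k with hn | hn
    · exact hbase n hn
    · obtain ⟨j, rfl⟩ := Nat.exists_eq_add_of_le' hn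
      calc C * r ^ (j + k) = r ^ k * (C * r ^ j) := by ring
        _ ≤ r ^ k * g j := mul_le_mul_of_nonneg_left (ih j (by omega)) (pow_nonneg hr k)
        _ ≤ g (j + k) := hstep j

theorem mul_rpow_one_div_pow (a : ℝ) {x : ℝ} (hx : 0 ≤ x) {k : ℕ} (hk : k ≠ 0) :
    (a * x ^ ((1 : ℝ) / k)) ^ k = a ^ k * x := by
  rw [mul_pow, one_div, Real.rpow_inv_natCast_pow hx hk]

section RootedTree

variable {V : Type*}

structure IsRootedTree (b : V) (parent : V → V) (depth : V → ℕ) : Prop where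
  depth_root : depth b = 0
  depth_eq_depth_parent_add_one : ∀ v, v ≠ b → depth v = depth (parent v) + 1

def descendantsAt (parent : V → V) (depth : V → ℕ) (v : V) (j : ℕ) : Set V :=
  {w | DescAt parent depth v j w}

variable {b : V} {parent : V → V} {depth : V → ℕ}

theorem descendantsAt_zero (v : V) : descendantsAt parent depth v 0 = {v} := by
  ext w
  simp only [descendantsAt, DescAt, Set.mem_ofPred_eq, Function.iterate_zero, id_eq, add_zero,
    Set.mem_singleton_iff]
  exact ⟨And.left, fun h => ⟨h, h ▸ rfl⟩⟩

theorem depth_eq_of_mem_descendantsAt {v w : V} {j : ℕ} (hw : w ∈ descendantsAt parent depth v j) :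
    depth w = depth v + j :=
  hw.2

theorem pairwiseDisjoint_descendantsAt (s : Set V) (j : ℕ) :
    s.PairwiseDisjoint fun u => descendantsAt parent depth u j := by
  intro u _ u' _ hne
  refine Set.disjoint_left.2 fun w hw hw' => hne ?_
  rw [← hw.1, ← hw'.1]

namespace IsRootedTree

variable (hT : IsRootedTree b parent depth)
include hT

theorem eq_root_of_depth_eq_zero {w : V} (hw : depth w = 0) : w = b := by
  by_contra hne
  have := hT.depth_eq_depth_parent_add_one w hne
  omega

theorem depth_iterate_parent_add {j : ℕ} {w : V} (hj : j ≤ depth w) :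
    depth (parent^[j] w) + j = depth w := by
  induction j generalizing w with
  | zero => rfl
  | succ j ih =>
    have hwb : w ≠ b := fun h => by rw [h, hT.depth_root] at hj; omega
    have hw := hT.depth_eq_depth_parent_add_one w hwb
    rw [Function.iterate_succ_apply]
    have := ih (w := parent w) (by omega)
    omega

theorem descendantsAt_add (v : V) (i j : ℕ) :
    descendantsAt parent depth v (i + j) =
      ⋃ u ∈ descendantsAt parent depth v i, descendantsAt parent depth u j := by
  ext w
  simp only [descendantsAt, DescAt, Set.mem_ofPred_eq, Set.mem_iUnion, exists_prop]
  constructor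
  · rintro ⟨hiter, hdepth⟩
    have := hT.depth_iterate_parent_add (j := j) (w := w) (by omega)
    refine ⟨parent^[j] w, ⟨?_, by omega⟩, rfl, by omega⟩
    rwa [← Function.iterate_add_apply]
  · rintro ⟨u, ⟨hu, hdu⟩, hw, hdw⟩
    exact ⟨by rw [Function.iterate_add_apply, hw, hu], by omega⟩

theorem descendantsAt_one (v : V) :
    descendantsAt parent depth v 1 = childrenSet b parent v := by
  ext w
  simp only [descendantsAt, DescAt, Set.mem_ofPred_eq, Function.iterate_one, childrenSet]
  constructor
  · rintro ⟨hw, hdw⟩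
    exact ⟨fun hwb => by rw [hwb, hT.depth_root] at hdw; omega, hw⟩
  · rintro ⟨hwb, hw⟩
    exact ⟨hw, by rw [hT.depth_eq_depth_parent_add_one w hwb, hw]⟩

theorem descendantsAt_root (n : ℕ) : descendantsAt parent depth b n = {w | depth w = n} := by
  ext w
  simp only [descendantsAt, DescAt, Set.mem_ofPred_eq, hT.depth_root, zero_add]
  refine ⟨And.right, fun hw => ⟨hT.eq_root_of_depth_eq_zero ?_, hw⟩⟩
  have := hT.depth_iterate_parent_add (j := n) (w := w) hw.ge
  omega

section FiniteBranching

variable (hfin : ∀ v, (childrenSet b parent v).Finite)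
include hfin

theorem finite_descendantsAt (v : V) (j : ℕ) : (descendantsAt parent depth v j).Finite := by
  induction j with
  | zero => simp [descendantsAt_zero]
  | succ j ih =>
    rw [hT.descendantsAt_add]
    exact ih.biUnion fun u _ => hT.descendantsAt_one u ▸ hfin u

theorem finite_setOf_depth_le (n : ℕ) : {w | depth w ≤ n}.Finite := by
  have hunion : {w | depth w ≤ n} = ⋃ m ∈ Set.Iic n, descendantsAt parent depth b m := by
    ext w
    simp [hT.descendantsAt_root]
  rw [hunion]
  exact (Set.finite_Iic n).biUnion fun m _ => hT.finite_descendantsAt hfin b m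

theorem ncard_descendantsAt_add (v : V) (i j : ℕ) :
    (descendantsAt parent depth v (i + j)).ncard =
      ∑ u ∈ (hT.finite_descendantsAt hfin v i).toFinset,
        (descendantsAt parent depth u j).ncard := by
  rw [hT.descendantsAt_add, (hT.finite_descendantsAt hfin v i).ncard_biUnion
    (fun u _ => hT.finite_descendantsAt hfin u j)
    (pairwiseDisjoint_descendantsAt _ j),
    finsum_mem_eq_finite_toFinset_sum]

theorem mul_ncard_le_ncard_descendantsAt_add {c : ℝ} {v : V} {i j : ℕ}
    (hc : ∀ u ∈ descendantsAt parent depth v i, c ≤ (descendantsAt parent depth u j).ncard) :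
    c * (descendantsAt parent depth v i).ncard ≤ (descendantsAt parent depth v (i + j)).ncard := by
  rw [hT.ncard_descendantsAt_add hfin,
    Set.ncard_eq_toFinset_card _ (hT.finite_descendantsAt hfin v i), mul_comm, ← nsmul_eq_mul, Nat.cast_sum]
  exact Finset.card_nsmul_le_sum _ _ _ fun u hu => hc u (Set.Finite.mem_toFinset _ |>.1 hu)

theorem two_mul_three_pow_le_ncard_descendantsAt {k : ℕ} {v : V}
    (hbranch : ∀ m < k, ∀ w ∈ descendantsAt parent depth v m,
      Nat.card (childrenSet b parent w) = 3 ∨ Nat.card (childrenSet b parent w) = 2)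
    (hunique : ∀ m < k, ∀ m' < k, ∀ w ∈ descendantsAt parent depth v m,
      ∀ w' ∈ descendantsAt parent depth v m',
      Nat.card (childrenSet b parent w) = 2 → Nat.card (childrenSet b parent w') = 2 → w = w') :
    2 * 3 ^ k ≤ 3 * (descendantsAt parent depth v k).ncard := by
  classical
  -- `w₀` is the vertex with two children, or `v` if the window has none
  obtain ⟨w₀, hw₀⟩ : ∃ w₀, ∀ m < k, ∀ w ∈ descendantsAt parent depth v m,
      Nat.card (childrenSet b parent w) = 2 → w = w₀ := by
    by_cases h : ∃ m < k, ∃ w ∈ descendantsAt parent depth v m,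
        Nat.card (childrenSet b parent w) = 2
    · obtain ⟨m', hm', w', hw', h2'⟩ := h
      exact ⟨w', fun m hm w hw h2 => hunique m hm m' hm' w hw w' hw' h2 h2'⟩
    · push Not at h
      exact ⟨v, fun m hm w hw h2 => absurd h2 (h m hm w hw)⟩
  refine two_mul_three_pow_le_of_three_mul_le (a := fun j => (descendantsAt parent depth v j).ncard)
    (ℓ := depth w₀ - depth v) (by simp [descendantsAt_zero]) fun j hj => ?_
  have hfinj := hT.finite_descendantsAt hfin v j
  set s := hfinj.toFinset
  have hsucc : (descendantsAt parent depth v (j + 1)).ncard =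
      ∑ u ∈ s, Nat.card (childrenSet b parent u) := by
    simp only [hT.ncard_descendantsAt_add hfin, hT.descendantsAt_one, Nat.card_coe_set_eq, s]
  have hloss : (if w₀ ∈ s then 1 else 0) ≤ if j = depth w₀ - depth v then 1 else 0 := by
    by_cases hw : w₀ ∈ s
    · have := depth_eq_of_mem_descendantsAt (hfinj.mem_toFinset.1 hw)
      rw [if_pos hw, if_pos (by omega)]
    · simp [hw]
  calc 3 * (descendantsAt parent depth v j).ncard = ∑ _u ∈ s, 3 := by
        rw [Finset.sum_const, smul_eq_mul, Set.ncard_eq_toFinset_card _ hfinj, mul_comm]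
    _ ≤ ∑ u ∈ s, (Nat.card (childrenSet b parent u) + if u = w₀ then 1 else 0) := by
        refine Finset.sum_le_sum fun u hu => ?_
        have hu' := hfinj.mem_toFinset.1 hu
        have h32 := hbranch j hj u hu'
        by_cases hu₀ : u = w₀
        · rw [if_pos hu₀]
          omega
        · have := mt (hw₀ j hj u hu') hu₀
          rw [if_neg hu₀]
          omega
    _ = (descendantsAt parent depth v (j + 1)).ncard + if w₀ ∈ s then 1 else 0 := by
        rw [Finset.sum_add_distrib, Finset.sum_ite_eq', hsucc]
    _ ≤ _ := Nat.add_le_add_left hloss _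

theorem ncard_descendantsAt_root_le_card (n : ℕ) :
    (descendantsAt parent depth b n).ncard ≤ Nat.card {v : V // depth v ≤ n} :=
  (Set.ncard_le_ncard ((hT.descendantsAt_root n).le.trans fun _ (hw : _ = n) => hw.le)
    (hT.finite_setOf_depth_le hfin n)).trans_eq (Nat.card_coe_set_eq _).symm

variable (htwo : ∀ v, 2 ≤ (childrenSet b parent v).ncard)
include htwo

theorem two_pow_le_ncard_descendantsAt (v : V) (n : ℕ) :
    (2 : ℝ) ^ n ≤ (descendantsAt parent depth v n).ncard := by
  simpa using mul_pow_le_of_pow_mul_le_add (C := 1)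
    (g := fun n => (descendantsAt parent depth v n).ncard) one_pos zero_le_two
    (fun j => hT.mul_ncard_le_ncard_descendantsAt_add hfin fun u _ => by
      rw [pow_one, hT.descendantsAt_one]
      exact_mod_cast htwo u)
    (fun s hs => by simp [Nat.lt_one_iff.1 hs, descendantsAt_zero]) n

theorem mul_pow_le_ncard_descendantsAt {k : ℕ} (hk : 0 < k)
    (hwindow : ∀ u, 2 * 3 ^ k ≤ 3 * (descendantsAt parent depth u k).ncard) (v : V) (n : ℕ) :
    ((2 : ℝ) / 3) ^ k * (3 * ((2 : ℝ) / 3) ^ ((1 : ℝ) / k)) ^ n ≤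
      (descendantsAt parent depth v n).ncard := by
  set r : ℝ := 3 * (2 / 3) ^ ((1 : ℝ) / k)
  have hr0 : 0 ≤ r := by positivity
  have hr3 : r ≤ 3 := by
    have : ((2 : ℝ) / 3) ^ ((1 : ℝ) / k) ≤ 1 :=
      Real.rpow_le_one (by norm_num) (by norm_num) (by positivity)
    linarith
  refine mul_pow_le_of_pow_mul_le_add (g := fun n => (descendantsAt parent depth v n).ncard)
    hk hr0 (fun j => ?_) (fun s hs => ?_) n
  · refine hT.mul_ncard_le_ncard_descendantsAt_add hfin fun u _ => ?_
    have := (Nat.cast_le (α := ℝ)).2 (hwindow u)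
    push_cast at this
    rw [mul_rpow_one_div_pow 3 (by norm_num) hk.ne']
    linarith
  · calc (2 / 3) ^ k * r ^ s ≤ (2 / 3) ^ s * 3 ^ s :=
          mul_le_mul (pow_le_pow_of_le_one (by norm_num) (by norm_num) hs.le)
            (pow_le_pow_left₀ hr0 hr3 s) (by positivity) (by positivity)
      _ = 2 ^ s := by rw [← mul_pow]; norm_num
      _ ≤ _ := hT.two_pow_le_ncard_descendantsAt hfin htwo v s

end FiniteBranching

end IsRootedTree

end RootedTree

theorem tree_growth_lower_bound_general
    {V : Type*} (k : ℕ) (hk : 1 ≤ k)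
    (b : V) (parent : V → V) (depth : V → ℕ)
    (hdroot : depth b = 0)
    (hdepth : ∀ v : V, v ≠ b → depth v = depth (parent v) + 1)
    (hbranch : ∀ v w : V, ∀ m : ℕ, m < k → DescAt parent depth v m w →
      Nat.card (childrenSet b parent w) = 3 ∨ Nat.card (childrenSet b parent w) = 2)
    (hunique : ∀ v : V, ∀ w w' : V, ∀ m m' : ℕ, m < k → m' < k →
      DescAt parent depth v m w → DescAt parent depth v m' w' →
      Nat.card (childrenSet b parent w) = 2 → Nat.card (childrenSet b parent w') = 2 →
      w = w') :
    ∃ C : ℝ, 0 < C ∧ ∀ n : ℕ,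
      C * ((3 : ℝ) * ((2 : ℝ) / 3) ^ ((1 : ℝ) / (k : ℝ))) ^ n
        ≤ (Nat.card {v : V // depth v ≤ n} : ℝ) := by
  have hT : IsRootedTree b parent depth := ⟨hdroot, hdepth⟩
  have htwo : ∀ w, 2 ≤ (childrenSet b parent w).ncard := fun w => by
    rcases hbranch w w 0 hk ⟨rfl, rfl⟩ with h | h <;> rw [← Nat.card_coe_set_eq] <;> omega
  have hfin u : (childrenSet b parent u).Finite :=
    Set.finite_of_ncard_pos (two_pos.trans_le (htwo u))
  have hwindow : ∀ u, 2 * 3 ^ k ≤ 3 * (descendantsAt parent depth u k).ncard := fun u =>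
    hT.two_mul_three_pow_le_ncard_descendantsAt hfin (fun m hm w hw => hbranch u w m hm hw)
      (fun m hm m' hm' w hw w' hw' => hunique u w w' m m' hm hm' hw hw')
  refine ⟨(2 / 3) ^ k, by positivity, fun n => ?_⟩
  calc _ ≤ ((descendantsAt parent depth b n).ncard : ℝ) :=
        hT.mul_pow_le_ncard_descendantsAt hfin htwo hk hwindow b n
    _ ≤ _ := by exact_mod_cast hT.ncard_descendantsAt_root_le_card hfin n

/-- let `T` be a rooted tree (encoded by a root `b`, a parent map and a
depth function) such that for every vertex `v`, the depth-`k` subtree rooted at `v` is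
a `k`-tree: every vertex of the subtree at depth `< k` below `v` has exactly `3`
children, except at most one such vertex which has exactly `2` children (in particular
no leaf of `T` occurs at depth `< k` below `v`).  Then there is `C > 0` with
`f_T(n) ≥ C·(3·(2/3)^{1/k})^n` for all `n`, where `f_T(n)` is the number of vertices at
distance at most `n` from the root. -/
theorem tree_growth_lower_bound
    {V : Type*} (k : ℕ) (hk : 1 ≤ k)
    (b : V) (parent : V → V) (depth : V → ℕ)
    (hroot : parent b = b) (hdroot : depth b = 0)
    (hdepth : ∀ v : V, v ≠ b → depth v = depth (parent v) + 1)
    (hbranch : ∀ v w : V, ∀ m : ℕ, m < k → DescAt parent depth v m w →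
      Nat.card (childrenSet b parent w) = 3 ∨ Nat.card (childrenSet b parent w) = 2)
    (hunique : ∀ v : V, ∀ w w' : V, ∀ m m' : ℕ, m < k → m' < k →
      DescAt parent depth v m w → DescAt parent depth v m' w' →
      Nat.card (childrenSet b parent w) = 2 → Nat.card (childrenSet b parent w') = 2 →
      w = w') :
    ∃ C : ℝ, 0 < C ∧ ∀ n : ℕ,
      C * ((3 : ℝ) * ((2 : ℝ) / 3) ^ ((1 : ℝ) / (k : ℝ))) ^ n
        ≤ (Nat.card {v : V // depth v ≤ n} : ℝ) :=
  tree_growth_lower_bound_general k hk b parent depth hdroot hdepth hbranch hunique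
end

section
/- There is a sequence of finitely generated infinite-index subgroups H_k of the free group F_2 such that the exponential growth rates λ_{H_k} (with respect to the standard Cayley graph of F_2) converge to 3 = λ_{F_2}. Specifically, for each k one can choose H_k with λ_{H_k} ≥ 3·(2/3)^{1/k}. -/
/-
A reduced word in `F₂` is its first letter followed, at each later position, by one of the
three letters that do not cancel the previous one; so `F₂` has at most `1 + 4n·3ⁿ` elements of
length `≤ n`, and every subgroup has growth rate at most `3`.

Conversely, the `3^(L-2)` reduced words of length `L` that start with `a` and end with `b^±1`
can be concatenated freely: products of `m` of them are reduced of length `mL`, so a subgroup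
generated by `s` of them has growth rate at least `s^(1/L)`. By pigeonhole, at least
`3^(L-2)/(2L+1)²` of them share the same exponent-sum vector `p ∈ ℤ²`; the subgroup they
generate then lies in the kernel of a nonzero homomorphism `F₂ → ℤ` vanishing on `p`, hence has
infinite index, and its growth rate is at least `3/(81L²)^(1/L) → 3`.
-/

open Filter

/-- The exponential growth rate of a subgroup `H` of the free group on two generators,
with respect to the standard word metric: `limsup_n f_H(n)^{1/n}` where
`f_H(n) = #{h ∈ H : |h| ≤ n}`. -/
noncomputable def subgroupGrowthRate (H : Subgroup (FreeGroup (Fin 2))) : ℝ :=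
  Filter.limsup
    (fun n : ℕ => (Nat.card {g : FreeGroup (Fin 2) // g ∈ H ∧ g.norm ≤ n} : ℝ) ^ ((1 : ℝ) / n))
    atTop

open Finset Multiplicative

noncomputable def subgroupBallCard {α : Type*} [DecidableEq α] (H : Subgroup (FreeGroup α))
    (n : ℕ) : ℕ :=
  Nat.card {g : FreeGroup α // g ∈ H ∧ g.norm ≤ n}

lemma List.eq_of_flatten_eq_of_forall_length_eq {β : Type*} {L : ℕ} :
    ∀ {ls ls' : List (List β)}, (∀ l ∈ ls, l.length = L) → (∀ l ∈ ls', l.length = L) →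
      ls.length = ls'.length → ls.flatten = ls'.flatten → ls = ls'
  | [], [], _, _, _, _ => rfl
  | l :: ls, l' :: ls', h, h', hlen, heq => by
    rw [List.flatten_cons, List.flatten_cons] at heq
    obtain ⟨rfl, hrest⟩ := List.append_inj heq (by
      rw [h l List.mem_cons_self, h' l' List.mem_cons_self])
    rw [List.eq_of_flatten_eq_of_forall_length_eq (fun l hl => h l (List.mem_cons_of_mem _ hl))
      (fun l hl => h' l (List.mem_cons_of_mem _ hl)) (by simpa using hlen) hrest]

theorem Subgroup.index_eq_zero_of_le_ker {G M : Type*} [Group G] [Group M] [IsMulTorsionFree M]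
    {H : Subgroup G} {χ : G →* M} (hχ : χ ≠ 1) (hH : H ≤ χ.ker) : H.index = 0 := by
  obtain ⟨g, hg⟩ : ∃ g, χ g ≠ 1 := by
    by_contra! h
    exact hχ (MonoidHom.ext h)
  have hrange : (χ.range : Set M).Infinite :=
    (infinite_zpowers.2 (not_isOfFinOrder_of_isMulTorsionFree hg)).mono
      (Subgroup.zpowers_le.2 ⟨g, rfl⟩)
  have hker : χ.ker.index = 0 := by
    rw [Subgroup.index_ker]
    have := hrange.to_subtype
    exact Nat.card_eq_zero_of_infinite
  exact Nat.eq_zero_of_zero_dvd (hker ▸ Subgroup.index_dvd_of_le hH)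

lemma tendsto_const_mul_pow_rpow_one_div {C : ℝ} (hC : 0 < C) (d : ℕ) :
    Tendsto (fun n : ℕ => (C * (n : ℝ) ^ d) ^ ((1 : ℝ) / n)) atTop (nhds 1) := by
  have hC' : Tendsto (fun n : ℕ => C ^ ((1 : ℝ) / n)) atTop (nhds 1) := by
    simpa using tendsto_const_nhds.rpow tendsto_one_div_atTop_nhds_zero_nat (Or.inl hC.ne')
  have hn : Tendsto (fun n : ℕ => ((n : ℝ) ^ ((1 : ℝ) / n)) ^ d) atTop (nhds 1) := by
    simpa using (tendsto_rpow_div.comp tendsto_natCast_atTop_atTop).pow d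
  have h := hC'.mul hn
  rw [one_mul] at h
  refine h.congr fun n => ?_
  rw [Real.mul_rpow hC.le (by positivity), Real.rpow_pow_comm (by positivity)]

namespace FreeGroup

variable {α : Type*} [DecidableEq α]

lemma finite_setOf_norm_le [Finite α] (n : ℕ) : {g : FreeGroup α | g.norm ≤ n}.Finite :=
  (List.finite_length_le _ n).preimage toWord_injective.injOn

lemma mk_flatten_map_toWord (l : List (FreeGroup α)) : mk (l.map toWord).flatten = l.prod := by
  induction l with
  | nil => rfl
  | cons g l ih => rw [List.map_cons, List.flatten_cons, ← mul_mk, mk_toWord, ih, List.prod_cons]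

lemma toWord_prod_of_isReduced {l : List (FreeGroup α)} (h : IsReduced (l.map toWord).flatten) :
    l.prod.toWord = (l.map toWord).flatten := by
  rw [← mk_flatten_map_toWord, toWord_mk, h.reduce_eq]

lemma isReduced_flatten_of_isReduced_append {S : Set (FreeGroup α)} (h1 : 1 ∉ S)
    (hS : ∀ s ∈ S, ∀ t ∈ S, IsReduced (s.toWord ++ t.toWord)) {l : List (FreeGroup α)}
    (hl : ∀ g ∈ l, g ∈ S) : IsReduced (l.map toWord).flatten := by
  have hne : [] ∉ l.map toWord := by
    simp only [List.mem_map, toWord_eq_nil_iff, not_exists, not_and]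
    exact fun g hg hg1 => h1 (hg1 ▸ hl g hg)
  refine (List.isChain_flatten hne).2 ⟨fun w hw => ?_, ?_⟩
  · obtain ⟨g, -, rfl⟩ := List.mem_map.1 hw
    exact isReduced_toWord
  · refine (List.pairwise_of_forall_mem_list ?_).isChain
    simp only [List.mem_map, forall_exists_index, and_imp, forall_apply_eq_imp_iff₂]
    exact fun s hs t ht => (List.isChain_append.1 (hS s (hl s hs) t (hl t ht))).2.2

theorem pow_card_le_subgroupBallCard_closure [Finite α] {S : Finset (FreeGroup α)} {L : ℕ}
    (hL : 0 < L) (hnorm : ∀ s ∈ S, s.norm = L)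
    (hS : ∀ s ∈ S, ∀ t ∈ S, IsReduced (s.toWord ++ t.toWord)) (m : ℕ) :
    #S ^ m ≤ subgroupBallCard (Subgroup.closure (S : Set (FreeGroup α))) (m * L) := by
  have hlen (s : S) : (s : FreeGroup α).toWord.length = L := hnorm s s.2
  have h1 : (1 : FreeGroup α) ∉ S := fun h => by simpa [hL.ne] using hnorm 1 h
  have hred (c : Fin m → S) :
      IsReduced ((List.ofFn fun i => (c i : FreeGroup α)).map toWord).flatten :=
    isReduced_flatten_of_isReduced_append h1 hS (by simp)
  let f : (Fin m → S) → {g : FreeGroup α // g ∈ Subgroup.closure (S : Set _) ∧ g.norm ≤ m * L} :=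
    fun c => ⟨(List.ofFn fun i => (c i : FreeGroup α)).prod,
      (Subgroup.closure _).list_prod_mem fun g hg => by
        obtain ⟨i, rfl⟩ := List.mem_ofFn.1 hg
        exact Subgroup.subset_closure (c i).2,
      by
        rw [norm, toWord_prod_of_isReduced (hred c)]
        simp [List.length_flatten, Function.comp_def, hlen]⟩
  have hf : Function.Injective f := by
    intro c c' h
    have h := congrArg (fun g => toWord g.1) h
    simp only [f, toWord_prod_of_isReduced (hred _), List.map_ofFn] at h
    have := List.ofFn_injective <| List.eq_of_flatten_eq_of_forall_length_eq (L := L)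
      (by simp [hlen]) (by simp [hlen]) (by simp) h
    exact funext fun i => Subtype.ext (toWord_injective (congrFun this i))
  have : Finite {g : FreeGroup α // g ∈ Subgroup.closure (S : Set _) ∧ g.norm ≤ m * L} :=
    ((finite_setOf_norm_le (m * L)).subset fun g hg => hg.2).to_subtype
  simpa [subgroupBallCard] using Nat.card_le_card_of_injective f hf

def exponentSums : FreeGroup α →* Multiplicative (α → ℤ) :=
  lift fun a => ofAdd (Pi.single a 1)

lemma abs_exponentSums_apply_le_norm (g : FreeGroup α) (a : α) :
    |toAdd (exponentSums g) a| ≤ g.norm := by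
  suffices ∀ l : List (α × Bool), |toAdd (exponentSums (mk l)) a| ≤ l.length by
    have h := this g.toWord
    rwa [mk_toWord] at h
  intro l
  induction l with
  | nil => simp [← one_eq_mk]
  | cons x l ih =>
    have hx : |toAdd (exponentSums (mk [x])) a| ≤ 1 := by
      obtain ⟨b, _ | _⟩ := x <;>
        simp [exponentSums, Pi.single_apply, apply_ite] <;> split_ifs <;> simp
    rw [← List.singleton_append, ← mul_mk, _root_.map_mul, toAdd_mul, Pi.add_apply,
      List.length_append, List.length_singleton, Nat.cast_add, Nat.cast_one]
    linarith [abs_add_le (toAdd (exponentSums (mk [x])) a) (toAdd (exponentSums (mk l)) a)]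

lemma exists_le_card_filter_exponentSums_eq [Fintype α] (B : Finset (FreeGroup α)) (L : ℕ)
    (hB : ∀ s ∈ B, s.norm ≤ L) :
    ∃ p, (#B : ℝ) / (2 * L + 1) ^ Fintype.card α ≤ #{s ∈ B | toAdd (exponentSums s) = p} := by
  let box := Fintype.piFinset fun _ : α => Icc (-(L : ℤ)) L
  have hmaps : ∀ s ∈ B, toAdd (exponentSums s) ∈ box := fun s hs => by
    simp only [box, Fintype.mem_piFinset, mem_Icc, ← abs_le]
    exact fun a => (abs_exponentSums_apply_le_norm s a).trans (by exact_mod_cast hB s hs)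
  have hcard : (#box : ℝ) = (2 * L + 1) ^ Fintype.card α := by
    simp only [box, Fintype.card_piFinset, Int.card_Icc, prod_const, card_univ]
    rw [show ((L : ℤ) + 1 - -L).toNat = 2 * L + 1 by omega]
    push_cast
    ring
  obtain ⟨p, -, hp⟩ := exists_le_card_fiber_of_nsmul_le_card_of_maps_to hmaps
    ⟨0, by simp [box]⟩ (b := (#B : ℝ) / (2 * L + 1) ^ Fintype.card α)
    (by rw [nsmul_eq_mul, hcard, mul_div_cancel₀ _ (by positivity)])
  exact ⟨p, hp⟩

theorem index_closure_eq_zero_of_exponentSums_eq {S : Set (FreeGroup (Fin 2))} {p : Fin 2 → ℤ}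
    (hS : ∀ s ∈ S, toAdd (exponentSums s) = p) : (Subgroup.closure S).index = 0 := by
  obtain ⟨w, hw, hwp⟩ := exists_ne_zero_dotProduct_eq_zero p
  let χ : FreeGroup (Fin 2) →* Multiplicative ℤ :=
    (AddMonoidHom.toMultiplicative (dotProductEquiv ℤ (Fin 2) w).toAddMonoidHom).comp exponentSums
  have hχ (g : FreeGroup (Fin 2)) : toAdd (χ g) = w ⬝ᵥ toAdd (exponentSums g) := rfl
  refine Subgroup.index_eq_zero_of_le_ker (χ := χ) (fun h => hw ?_) ((Subgroup.closure_le _).2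
    fun s hs => by rw [SetLike.mem_coe, MonoidHom.mem_ker, ← toAdd_eq_zero, hχ, hS s hs, hwp])
  ext i
  simpa [hχ, exponentSums, dotProduct_single] using congrArg toAdd (DFunLike.congr_fun h (of i))

abbrev Letter := Fin 2 × Bool

def followers (x : Letter) : List Letter :=
  [(0, true), (0, false), (1, true), (1, false)].filter fun y => x.1 = y.1 → x.2 = y.2

-- `followers x` has exactly three entries, so the default value `x` is never used.
def nextLetter (x : Letter) (t : Fin 3) : Letter := (followers x).getD t x

lemma nextLetter_follows : ∀ x t, x.1 = (nextLetter x t).1 → x.2 = (nextLetter x t).2 := by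
  decide

lemma nextLetter_injective : ∀ x, Function.Injective (nextLetter x) := by
  decide

lemma exists_nextLetter_eq : ∀ x y : Letter, (x.1 = y.1 → x.2 = y.2) → ∃ t, nextLetter x t = y := by
  decide

def ofTurns : Letter → List (Fin 3) → List Letter
  | x, [] => [x]
  | x, t :: ts => x :: ofTurns (nextLetter x t) ts

@[simp]
lemma length_ofTurns (x : Letter) (ts : List (Fin 3)) : (ofTurns x ts).length = ts.length + 1 := by
  induction ts generalizing x <;> simp [ofTurns, *]

@[simp]
lemma ofTurns_ne_nil (x : Letter) (ts : List (Fin 3)) : ofTurns x ts ≠ [] := by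
  cases ts <;> simp [ofTurns]

lemma head?_ofTurns (x : Letter) (ts : List (Fin 3)) : (ofTurns x ts).head? = some x := by
  cases ts <;> rfl

lemma isReduced_ofTurns (x : Letter) (ts : List (Fin 3)) : IsReduced (ofTurns x ts) := by
  induction ts generalizing x with
  | nil => exact IsReduced.singleton
  | cons t ts ih =>
    refine List.isChain_cons.2 ⟨?_, ih _⟩
    simp only [head?_ofTurns, Option.mem_def, Option.some.injEq, forall_eq']
    exact nextLetter_follows x t

lemma ofTurns_injective (x : Letter) : Function.Injective (ofTurns x) := by
  intro ts ts' h
  induction ts generalizing x ts' with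
  | nil => cases ts' <;> simp_all [ofTurns]
  | cons t ts ih =>
    cases ts' with
    | nil => simpa using congrArg List.length h
    | cons t' ts' =>
      obtain ⟨-, h⟩ := List.cons_eq_cons.1 h
      have ht : t = t' :=
        nextLetter_injective x (by simpa [head?_ofTurns] using congrArg List.head? h)
      subst ht
      rw [ih _ h]

lemma exists_ofTurns_eq {x : Letter} {w : List Letter} (h : IsReduced (x :: w)) :
    ∃ ts, ts.length = w.length ∧ ofTurns x ts = x :: w := by
  induction w generalizing x with
  | nil => exact ⟨[], rfl, rfl⟩
  | cons y w ih =>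
    obtain ⟨hxy, hw⟩ := List.isChain_cons_cons.1 h
    obtain ⟨t, rfl⟩ := exists_nextLetter_eq x y hxy
    obtain ⟨ts, hlen, hts⟩ := ih hw
    exact ⟨t :: ts, by simp [hlen], by rw [ofTurns, hts]⟩

theorem card_ball_le (n : ℕ) :
    Nat.card {g : FreeGroup (Fin 2) // g.norm ≤ n} ≤ 1 + 4 * n * 3 ^ n := by
  let decode : Option (Letter × Σ m : Fin n, List.Vector (Fin 3) m) →
      {g : FreeGroup (Fin 2) // g.norm ≤ n}
    | none => ⟨1, by simp⟩
    | some (x, ⟨m, ts⟩) => ⟨mk (ofTurns x ts.toList), norm_mk_le.trans (by simp)⟩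
  have hdecode : Function.Surjective decode := by
    rintro ⟨g, hg⟩
    cases hw : g.toWord with
    | nil => exact ⟨none, Subtype.ext (toWord_eq_nil_iff.1 hw).symm⟩
    | cons x w =>
      obtain ⟨ts, hlen, hts⟩ := exists_ofTurns_eq (hw ▸ isReduced_toWord)
      have hm : ts.length < n := by rw [norm, hw] at hg; simp at hg; omega
      refine ⟨some (x, ⟨⟨ts.length, hm⟩, ⟨ts, rfl⟩⟩), Subtype.ext ?_⟩
      simp only [decode, List.Vector.toList_mk, hts, ← hw, mk_toWord]
  calc Nat.card {g : FreeGroup (Fin 2) // g.norm ≤ n}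
      ≤ Nat.card (Option (Letter × Σ m : Fin n, List.Vector (Fin 3) m)) :=
        Nat.card_le_card_of_surjective decode hdecode
    _ = 1 + 4 * ∑ m : Fin n, 3 ^ (m : ℕ) := by
        simp [Nat.card_eq_fintype_card, Fintype.card_sigma, card_vector, add_comm]
    _ ≤ 1 + 4 * n * 3 ^ n := by
        have : ∑ m : Fin n, 3 ^ (m : ℕ) ≤ n * 3 ^ n := by
          simpa using Finset.sum_le_card_nsmul Finset.univ (fun m : Fin n => 3 ^ (m : ℕ)) (3 ^ n)
            fun m _ => Nat.pow_le_pow_right (by norm_num) m.2.le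
        rw [mul_assoc]
        gcongr

def closingLetter (o : Option Letter) : Letter :=
  if o = some (1, false) then (1, false) else (1, true)

lemma closingLetter_follows :
    ∀ x : Letter, x.1 = (closingLetter (some x)).1 → x.2 = (closingLetter (some x)).2 := by
  decide

lemma closingLetter_fst : ∀ o, (closingLetter o).1 = 1 := by
  decide

def blockWord (ts : List (Fin 3)) : List Letter :=
  ofTurns (0, true) ts ++ [closingLetter (ofTurns (0, true) ts).getLast?]

@[simp]
lemma length_blockWord (ts : List (Fin 3)) : (blockWord ts).length = ts.length + 2 := by
  simp [blockWord]

lemma isReduced_blockWord (ts : List (Fin 3)) : IsReduced (blockWord ts) := by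
  refine (isReduced_ofTurns _ ts).append IsReduced.singleton ?_
  simp only [List.head?_cons, Option.mem_def, Option.some.injEq, forall_eq']
  intro x hx
  rw [hx]
  exact closingLetter_follows x

lemma isReduced_blockWord_append (ts ts' : List (Fin 3)) :
    IsReduced (blockWord ts ++ blockWord ts') := by
  refine (isReduced_blockWord ts).append (isReduced_blockWord ts') ?_
  simp [blockWord, head?_ofTurns, closingLetter_fst]

lemma blockWord_injective : Function.Injective blockWord := by
  intro ts ts' h
  have hlen : ts.length = ts'.length := by simpa using congrArg List.length h
  exact ofTurns_injective _ (List.append_inj_left h (by simp [hlen]))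

lemma exists_finset_card_eq_three_pow (n : ℕ) : ∃ B : Finset (FreeGroup (Fin 2)), #B = 3 ^ n ∧
    (∀ s ∈ B, s.norm = n + 2) ∧ ∀ s ∈ B, ∀ t ∈ B, IsReduced (s.toWord ++ t.toWord) := by
  have htoWord (c : Fin n → Fin 3) :
      (mk (blockWord (List.ofFn c))).toWord = blockWord (List.ofFn c) := by
    rw [toWord_mk, (isReduced_blockWord _).reduce_eq]
  refine ⟨univ.image fun c : Fin n → Fin 3 => mk (blockWord (List.ofFn c)), ?_, ?_, ?_⟩
  · rw [card_image_of_injective _ fun c c' h => List.ofFn_injective (blockWord_injective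
      (by simpa only [htoWord] using congrArg toWord h))]
    simp
  · simp [norm, htoWord]
  · simp [htoWord, isReduced_blockWord_append]

end FreeGroup

open FreeGroup

lemma subgroupGrowthRate_eq (H : Subgroup (FreeGroup (Fin 2))) : subgroupGrowthRate H =
    limsup (fun n : ℕ => (subgroupBallCard H n : ℝ) ^ ((1 : ℝ) / n)) atTop :=
  rfl

lemma subgroupBallCard_le (H : Subgroup (FreeGroup (Fin 2))) (n : ℕ) :
    subgroupBallCard H n ≤ 1 + 4 * n * 3 ^ n := by
  have : Finite {g : FreeGroup (Fin 2) // g.norm ≤ n} := (finite_setOf_norm_le n).to_subtype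
  refine le_trans ?_ (card_ball_le n)
  exact Nat.card_le_card_of_injective _ (Subtype.impEmbedding _ _ fun g hg => hg.2).injective

lemma eventually_rpow_subgroupBallCard_le (H : Subgroup (FreeGroup (Fin 2))) :
    ∀ᶠ n : ℕ in atTop,
      (subgroupBallCard H n : ℝ) ^ ((1 : ℝ) / n) ≤ (5 * (n : ℝ)) ^ ((1 : ℝ) / n) * 3 := by
  filter_upwards [eventually_ge_atTop 1] with n hn
  have hcard : (subgroupBallCard H n : ℝ) ≤ 5 * (n : ℝ) * 3 ^ n := by
    have h3 : 1 ≤ 3 ^ n := Nat.one_le_pow _ _ (by norm_num)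
    have := (subgroupBallCard_le H n).trans (show 1 + 4 * n * 3 ^ n ≤ 5 * n * 3 ^ n by nlinarith)
    exact_mod_cast this
  calc (subgroupBallCard H n : ℝ) ^ ((1 : ℝ) / n)
      ≤ (5 * (n : ℝ) * 3 ^ n) ^ ((1 : ℝ) / n) :=
        Real.rpow_le_rpow (by positivity) hcard (by positivity)
    _ = (5 * (n : ℝ)) ^ ((1 : ℝ) / n) * 3 := by
        rw [Real.mul_rpow (by positivity) (by positivity), one_div,
          Real.pow_rpow_inv_natCast (by norm_num) (by omega)]

lemma tendsto_five_mul_rpow_one_div_mul_three :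
    Tendsto (fun n : ℕ => (5 * (n : ℝ)) ^ ((1 : ℝ) / n) * 3) atTop (nhds 3) := by
  simpa only [pow_one, one_mul] using
    (tendsto_const_mul_pow_rpow_one_div (by norm_num : (0 : ℝ) < 5) 1).mul_const 3

lemma isBoundedUnder_rpow_subgroupBallCard (H : Subgroup (FreeGroup (Fin 2))) :
    IsBoundedUnder (· ≤ ·) atTop (fun n : ℕ => (subgroupBallCard H n : ℝ) ^ ((1 : ℝ) / n)) :=
  tendsto_five_mul_rpow_one_div_mul_three.isBoundedUnder_le.mono_le
    (eventually_rpow_subgroupBallCard_le H)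

theorem subgroupGrowthRate_le_three (H : Subgroup (FreeGroup (Fin 2))) :
    subgroupGrowthRate H ≤ 3 := by
  rw [subgroupGrowthRate_eq, ← tendsto_five_mul_rpow_one_div_mul_three.limsup_eq]
  exact limsup_le_limsup (eventually_rpow_subgroupBallCard_le H)
    (IsBoundedUnder.isCoboundedUnder_le ⟨0, eventually_map.2 (Eventually.of_forall
      fun n => by positivity)⟩)
    tendsto_five_mul_rpow_one_div_mul_three.isBoundedUnder_le

theorem le_subgroupGrowthRate_of_pow_le {H : Subgroup (FreeGroup (Fin 2))} {L : ℕ} (hL : 0 < L)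
    {c : ℝ} (hc : 0 ≤ c) (h : ∀ m, c ^ m ≤ subgroupBallCard H (m * L)) :
    c ^ ((1 : ℝ) / L) ≤ subgroupGrowthRate H := by
  rw [subgroupGrowthRate_eq]
  refine le_limsup_of_frequently_le (frequently_atTop.2 fun k => ⟨(k + 1) * L, by nlinarith, ?_⟩)
    (isBoundedUnder_rpow_subgroupBallCard H)
  calc c ^ ((1 : ℝ) / L) = (c ^ (k + 1)) ^ ((1 : ℝ) / ((k + 1) * L : ℕ)) := by
        rw [← Real.rpow_natCast, ← Real.rpow_mul hc]
        congr 1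
        push_cast
        field_simp
    _ ≤ _ := Real.rpow_le_rpow (by positivity) (h (k + 1)) (by positivity)

lemma three_pow_div_le (n : ℕ) :
    (3 : ℝ) ^ (n + 2) / (81 * ((n + 2 : ℕ) : ℝ) ^ 2) ≤ 3 ^ n / (2 * ((n + 2 : ℕ) : ℝ) + 1) ^ 2 := by
  rw [div_le_div_iff₀ (by positivity) (by positivity), pow_add]
  have h3 : (0 : ℝ) < 3 ^ n := by positivity
  have hsq : (2 * ((n + 2 : ℕ) : ℝ) + 1) ^ 2 ≤ 9 * ((n + 2 : ℕ) : ℝ) ^ 2 := by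
    push_cast
    nlinarith [n.cast_nonneg (α := ℝ)]
  nlinarith

-- There are `3 ^ (L - 2)` blocks of length `L` and at most `(2L + 1)² ≤ 9L²` exponent-sum vectors.
theorem exists_fg_index_eq_zero_le_subgroupGrowthRate (L : ℕ) (hL : 2 ≤ L) :
    ∃ H : Subgroup (FreeGroup (Fin 2)), H.FG ∧ H.index = 0 ∧
      3 / (81 * (L : ℝ) ^ 2) ^ ((1 : ℝ) / L) ≤ subgroupGrowthRate H := by
  obtain ⟨n, rfl⟩ : ∃ n, L = n + 2 := ⟨L - 2, by omega⟩
  obtain ⟨B, hcard, hnorm, hred⟩ := exists_finset_card_eq_three_pow n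
  obtain ⟨p, hp⟩ := exists_le_card_filter_exponentSums_eq B (n + 2) fun s hs => (hnorm s hs).le
  set S := {s ∈ B | toAdd (exponentSums s) = p}
  refine ⟨Subgroup.closure S, (Subgroup.fg_iff _).2 ⟨S, rfl, S.finite_toSet⟩,
    index_closure_eq_zero_of_exponentSums_eq fun s hs => (mem_filter.1 hs).2, ?_⟩
  have hgrowth := le_subgroupGrowthRate_of_pow_le (H := Subgroup.closure S) (L := n + 2)
    (by omega) (c := #S) (by positivity) fun m => by
      exact_mod_cast pow_card_le_subgroupBallCard_closure (S := S) (by omega)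
        (fun s hs => hnorm s (mem_filter.1 hs).1)
        (fun s hs t ht => hred s (mem_filter.1 hs).1 t (mem_filter.1 ht).1) m
  refine le_trans ?_ hgrowth
  have hS : (3 : ℝ) ^ (n + 2) / (81 * ((n + 2 : ℕ) : ℝ) ^ 2) ≤ #S := by
    refine (three_pow_div_le n).trans (le_trans (le_of_eq ?_) hp)
    rw [hcard, Fintype.card_fin, Nat.cast_pow, Nat.cast_ofNat]
  calc 3 / (81 * ((n + 2 : ℕ) : ℝ) ^ 2) ^ ((1 : ℝ) / (n + 2 : ℕ))
      = ((3 : ℝ) ^ (n + 2) / (81 * ((n + 2 : ℕ) : ℝ) ^ 2)) ^ ((1 : ℝ) / (n + 2 : ℕ)) := by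
        rw [Real.div_rpow (by positivity) (by positivity), one_div (((n + 2 : ℕ) : ℝ)),
          Real.pow_rpow_inv_natCast (by norm_num) (by omega)]
    _ ≤ _ := Real.rpow_le_rpow (by positivity) hS (by positivity)

theorem exists_fg_index_eq_zero_le_subgroupGrowthRate_of_lt {r : ℝ} (hr : r < 3) :
    ∃ H : Subgroup (FreeGroup (Fin 2)), H.FG ∧ H.index = 0 ∧ r ≤ subgroupGrowthRate H := by
  have hlim : Tendsto (fun L : ℕ => 3 / (81 * (L : ℝ) ^ 2) ^ ((1 : ℝ) / L)) atTop (nhds 3) := by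
    have := (tendsto_const_nhds (x := (3 : ℝ))).div
      (tendsto_const_mul_pow_rpow_one_div (by norm_num : (0 : ℝ) < 81) 2) one_ne_zero
    rwa [div_one] at this
  obtain ⟨L, hrL, hL⟩ := ((hlim.eventually_const_lt hr).and (eventually_ge_atTop 2)).exists
  obtain ⟨H, hfg, hidx, hH⟩ := exists_fg_index_eq_zero_le_subgroupGrowthRate L hL
  exact ⟨H, hfg, hidx, hrL.le.trans hH⟩

lemma tendsto_three_mul_rpow_one_div :
    Tendsto (fun k : ℕ => (3 : ℝ) * ((2 : ℝ) / 3) ^ ((1 : ℝ) / (k : ℝ))) atTop (nhds 3) := by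
  simpa using (tendsto_const_nhds.rpow tendsto_one_div_atTop_nhds_zero_nat
    (Or.inl (by norm_num : (2 : ℝ) / 3 ≠ 0))).const_mul (3 : ℝ)

/-- there is a sequence of finitely generated infinite-index subgroups
`H_k` of the free group `F_2` whose growth rates converge to `3 = λ_{F_2}`; indeed one
can choose `H_k` with `λ_{H_k} ≥ 3·(2/3)^{1/k}`. -/
theorem exists_subgroups_growth_tendsto_three :
    ∃ H : ℕ → Subgroup (FreeGroup (Fin 2)),
      (∀ k : ℕ, 1 ≤ k → (H k).FG ∧ (H k).index = 0 ∧
        (3 : ℝ) * ((2 : ℝ) / 3) ^ ((1 : ℝ) / (k : ℝ)) ≤ subgroupGrowthRate (H k)) ∧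
      Tendsto (fun k : ℕ => subgroupGrowthRate (H k)) atTop (nhds 3) := by
  have key (k : ℕ) : ∃ H : Subgroup (FreeGroup (Fin 2)), H.FG ∧ H.index = 0 ∧
      (1 ≤ k → (3 : ℝ) * ((2 : ℝ) / 3) ^ ((1 : ℝ) / (k : ℝ)) ≤ subgroupGrowthRate H) := by
    by_cases hk : 1 ≤ k
    · have hr : (3 : ℝ) * ((2 : ℝ) / 3) ^ ((1 : ℝ) / (k : ℝ)) < 3 := by
        have := Real.rpow_lt_one (by norm_num) (by norm_num : (2 : ℝ) / 3 < 1)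
          (by positivity : (0 : ℝ) < 1 / (k : ℝ))
        linarith
      obtain ⟨H, hfg, hidx, hH⟩ := exists_fg_index_eq_zero_le_subgroupGrowthRate_of_lt hr
      exact ⟨H, hfg, hidx, fun _ => hH⟩
    · obtain ⟨H, hfg, hidx, -⟩ :=
        exists_fg_index_eq_zero_le_subgroupGrowthRate_of_lt (by norm_num : (0 : ℝ) < 3)
      exact ⟨H, hfg, hidx, fun h => absurd h hk⟩
  choose H hfg hidx hH using key
  refine ⟨H, fun k hk => ⟨hfg k, hidx k, hH k hk⟩, ?_⟩
  exact tendsto_of_tendsto_of_tendsto_of_le_of_le' tendsto_three_mul_rpow_one_div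
    tendsto_const_nhds ((eventually_ge_atTop 1).mono hH)
    (Eventually.of_forall fun k => subgroupGrowthRate_le_three (H k))
end
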